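/- Suppose there exists δ > 0 such that p_i > δ for all i ≥ 1. Then there exists a real number R > 1 such that E = ∩_{n=0}^{∞} q_{F_n}^{-1}(D(0,R)) where D(0,R) is the open disk of center 0 and radius R, and moreover the preimages are nested: q_{F_{n+1}}^{-1}(D(0,R)) ⊆ q_{F_n}^{-1}(D(0,R)) for all n ≥ 0. -/

import Mathlib

/-- `rr p n = r_n = p (⌊(n+1)/2⌋ + 1)`. -/
noncomputable def rr (p : ℕ → ℝ) (n : ℕ) : ℝ := p ((n+1)/2 + 1)

/-- `qF p z n = q_{F_n}(z)`. -/
noncomputable def qF (p : ℕ → ℝ) (z : ℂ) : ℕ → ℂ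
  | 0 => (z - (1 - (p 1 : ℂ))) / (p 1 : ℂ)
  | 1 => (1 / (p 2 : ℂ)) * (qF p z 0) ^ 2 - (1 / (p 2 : ℂ) - 1)
  | (n+2) => (1 / (rr p (n+2) : ℂ)) * qF p z (n+1) * qF p z n - (1 / (rr p (n+2) : ℂ) - 1)

/-- The fibered filled Julia set `E = {z : (q_{F_n}(z))ₙ is bounded}`. -/
def Eset (p : ℕ → ℝ) : Set ℂ := {z : ℂ | ∃ C : ℝ, ∀ n : ℕ, ‖qF p z n‖ ≤ C}


/-!
Put `s n = q_{F_{n-1}}`, so that `s 0 = s 1 = q_{F_0}`. Then for every `n` the recursion reads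
`s (n+1) * s n = r * s (n+2) + (1 - r)` with `δ < r ≤ 1`: the product of two consecutive terms is a
convex combination of the next term and `1`. Hence `|s (n+1) * s n| ≥ 1` forces
`|s (n+2)| ≥ |s (n+1) * s n|`, while always `|s (n+1) * s n| ≥ δ |s (n+2)| - 1`.
A descent by steps of two shows that a term of modulus `≥ T = 2/δ` is never followed by one of
modulus `< 1`. So a term of modulus `≥ R = (T + 1)/δ` is preceded by one of modulus `≥ 1`, its
successor is at least as large, and from there on the moduli grow geometrically.
-/

open Filter

structure ConsecutiveProductBounds (δ : ℝ) (a : ℕ → ℝ) : Prop where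
  nonneg : ∀ n, 0 ≤ a n
  one_eq_zero : a 1 = a 0
  mul_le_of_one_le : ∀ n, 1 ≤ a (n+1) * a n → a (n+1) * a n ≤ a (n+2)
  le_mul : ∀ n, δ * a (n+2) - 1 ≤ a (n+1) * a n

namespace ConsecutiveProductBounds

variable {δ T R : ℝ} {a : ℕ → ℝ}

theorem mul_lt_one (h : ConsecutiveProductBounds δ a) {n : ℕ} (hn : a (n+2) < 1) :
    a (n+1) * a n < 1 := by
  by_contra! h1
  linarith [h.mul_le_of_one_le n h1]

theorem one_le_succ_of_le (h : ConsecutiveProductBounds δ a) (hT : 1 ≤ T) (hδT : 2 ≤ δ * T) :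
    ∀ n, T ≤ a n → 1 ≤ a (n+1) := by
  have hδ : 0 < δ := by nlinarith
  intro n
  induction n using Nat.twoStepInduction with
  | zero => intro h0; rw [h.one_eq_zero]; linarith
  | one =>
    intro h1
    by_contra! h2
    have := h.mul_lt_one h2
    rw [h.one_eq_zero] at this h1
    nlinarith
  | more k ih _ =>
    intro hk
    by_contra! hk3
    have hsmall := h.mul_lt_one hk3
    have hlarge : 1 ≤ a (k+1) * a k := by nlinarith [h.le_mul k]
    have hak : T ≤ a k := by
      by_contra! hak
      nlinarith [h.nonneg (k+1)]
    nlinarith [ih hak, h.nonneg (k+1)]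

theorem one_le_of_le_succ (h : ConsecutiveProductBounds δ a) (hT : 1 ≤ T) (hδT : 2 ≤ δ * T)
    (hR : T + 1 ≤ δ * R) (hR1 : 1 ≤ R) {n : ℕ} (hn : R ≤ a (n+1)) : 1 ≤ a n := by
  have hδ : 0 < δ := by nlinarith
  by_contra! hn1
  cases n with
  | zero => rw [h.one_eq_zero] at hn; linarith
  | succ k =>
    have hak : T ≤ a k := by nlinarith [h.le_mul k, h.nonneg k, h.nonneg (k+1)]
    linarith [h.one_le_succ_of_le hT hδT k hak]

theorem le_succ_of_le (h : ConsecutiveProductBounds δ a) (hT : 1 ≤ T) (hδT : 2 ≤ δ * T)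
    (hR : T + 1 ≤ δ * R) (hR1 : 1 ≤ R) {n : ℕ} (hn : R ≤ a (n+1)) : R ≤ a (n+2) := by
  have hprod : R ≤ a (n+1) * a n := by
    nlinarith [h.one_le_of_le_succ hT hδT hR hR1 hn]
  linarith [h.mul_le_of_one_le n (hR1.trans hprod)]

theorem tendsto_atTop (h : ConsecutiveProductBounds δ a) (hT : 1 ≤ T) (hδT : 2 ≤ δ * T)
    (hR : T + 1 ≤ δ * R) (hR1 : 1 < R) {m : ℕ} (hm : R ≤ a (m+1)) :
    Tendsto a atTop atTop := by
  have hlarge : ∀ k, R ≤ a (k + (m + 1)) := by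
    intro k
    induction k with
    | zero => rwa [zero_add]
    | succ k ih =>
      rw [show k + 1 + (m + 1) = k + m + 2 by omega]
      exact h.le_succ_of_le hT hδT hR hR1.le (by rwa [show k + m + 1 = k + (m + 1) by omega])
  rw [← tendsto_add_atTop_iff_nat (m + 2)]
  have hstart : R ≤ a (0 + (m + 2)) := by simpa [add_comm, add_left_comm] using hlarge 1
  refine tendsto_atTop_of_geom_le (by linarith) hR1 fun k => ?_
  have hn := hlarge k
  have hn1 := hlarge (k + 1)
  rw [show k + 1 + (m + 1) = k + (m + 1) + 1 by omega] at hn1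
  rw [show k + (m + 2) = k + (m + 1) + 1 by omega, show k + 1 + (m + 2) = k + (m + 1) + 2 by omega]
  have hprod : R * a (k + (m + 1) + 1) ≤ a (k + (m + 1) + 1) * a (k + (m + 1)) := by nlinarith
  exact hprod.trans (h.mul_le_of_one_le _ (by nlinarith))

end ConsecutiveProductBounds

theorem norm_one_sub_ofReal {r : ℝ} (hr1 : r ≤ 1) : ‖(1 - r : ℂ)‖ = 1 - r := by
  rw [← Complex.ofReal_one, ← Complex.ofReal_sub, Complex.norm_of_nonneg (by linarith)]

theorem norm_mul_add_one_sub_le {r : ℝ} (hr0 : 0 ≤ r) (hr1 : r ≤ 1) (v : ℂ) :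
    ‖(r : ℂ) * v + (1 - r)‖ ≤ r * ‖v‖ + (1 - r) := by
  calc _ ≤ ‖(r : ℂ) * v‖ + ‖(1 - r : ℂ)‖ := norm_add_le _ _
    _ = r * ‖v‖ + (1 - r) := by
      rw [norm_mul, Complex.norm_of_nonneg hr0, norm_one_sub_ofReal hr1]

theorem le_norm_mul_add_one_sub {r : ℝ} (hr0 : 0 ≤ r) (hr1 : r ≤ 1) (v : ℂ) :
    r * ‖v‖ - (1 - r) ≤ ‖(r : ℂ) * v + (1 - r)‖ := by
  have := norm_sub_le ((r : ℂ) * v + (1 - r)) (1 - r)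
  rw [add_sub_cancel_right, norm_mul, Complex.norm_of_nonneg hr0, norm_one_sub_ofReal hr1] at this
  linarith

theorem consecutiveProductBounds_norm {δ : ℝ} {r : ℕ → ℝ} {s : ℕ → ℂ}
    (hr : ∀ n, 0 < r n ∧ r n ≤ 1) (hδr : ∀ n, δ ≤ r n)
    (hrec : ∀ n, s (n+1) * s n = r n * s (n+2) + (1 - r n)) (h10 : s 1 = s 0) :
    ConsecutiveProductBounds δ (fun n => ‖s n‖) where
  nonneg n := norm_nonneg _
  one_eq_zero := by rw [h10]
  mul_le_of_one_le n h1 := by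
    have hle := norm_mul_add_one_sub_le (hr n).1.le (hr n).2 (s (n+2))
    rw [← hrec, norm_mul] at hle
    nlinarith [(hr n).1, mul_nonneg (sub_nonneg.2 (hr n).2) (sub_nonneg.2 h1)]
  le_mul n := by
    have hle := le_norm_mul_add_one_sub (hr n).1.le (hr n).2 (s (n+2))
    rw [← hrec, norm_mul] at hle
    nlinarith [(hr n).1, mul_nonneg (sub_nonneg.2 (hδr n)) (norm_nonneg (s (n+2)))]

theorem qF_mul_qF_pred {p : ℕ → ℝ} (hr : ∀ n, rr p (n+1) ≠ 0) (z : ℂ) (n : ℕ) :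
    qF p z n * qF p z (n - 1) = rr p (n+1) * qF p z (n+1) + (1 - rr p (n+1)) := by
  have hr' : (rr p (n+1) : ℂ) ≠ 0 := Complex.ofReal_ne_zero.2 (hr n)
  cases n with
  | zero =>
    rw [qF.eq_2]
    change (p 2 : ℂ) ≠ 0 at hr'
    change _ = (p 2 : ℂ) * _ + (1 - (p 2 : ℂ))
    field_simp
    ring
  | succ k =>
    rw [qF.eq_3, Nat.add_sub_cancel]
    field_simp
    ring

theorem consecutiveProductBounds_qF {p : ℕ → ℝ} {δ : ℝ} (hp : ∀ i, 1 ≤ i → 0 < p i ∧ p i ≤ 1)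
    (hpδ : ∀ i, 1 ≤ i → δ < p i) (z : ℂ) :
    ConsecutiveProductBounds δ (fun n => ‖qF p z (n - 1)‖) :=
  have hr : ∀ n, 0 < rr p (n+1) ∧ rr p (n+1) ≤ 1 := fun _ => hp _ (Nat.le_add_left 1 _)
  consecutiveProductBounds_norm hr (fun _ => (hpδ _ (Nat.le_add_left 1 _)).le)
    (qF_mul_qF_pred (fun n => (hr n).1.ne') z) rfl

/-- Suppose `p i > δ > 0` for all `i ≥ 1`.  Then there is `R > 1`
such that `E = ⋂ₙ q_{F_n}⁻¹(D(0,R))` (open disks) and the preimages are nested: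
`q_{F_{n+1}}⁻¹(D(0,R)) ⊆ q_{F_n}⁻¹(D(0,R))` for all `n ≥ 0`. -/
theorem stmt16 (p : ℕ → ℝ) (hp : ∀ i, 1 ≤ i → 0 < p i ∧ p i ≤ 1)
    (δ : ℝ) (hδ : 0 < δ) (hpδ : ∀ i, 1 ≤ i → δ < p i) :
    ∃ R : ℝ, 1 < R ∧
      Eset p = ⋂ n : ℕ, (fun z : ℂ => qF p z n) ⁻¹' Metric.ball 0 R ∧
      ∀ n : ℕ, (fun z : ℂ => qF p z (n+1)) ⁻¹' Metric.ball 0 R ⊆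
        (fun z : ℂ => qF p z n) ⁻¹' Metric.ball 0 R := by
  have hδ1 : δ < 1 := (hpδ 1 le_rfl).trans_le (hp 1 le_rfl).2
  set T := 2 / δ
  set R := (T + 1) / δ
  have hT : 1 ≤ T := by rw [le_div_iff₀ hδ]; linarith
  have hδT : 2 ≤ δ * T := by rw [mul_div_cancel₀ _ hδ.ne']
  have hδR : T + 1 ≤ δ * R := by rw [mul_div_cancel₀ _ hδ.ne']
  have hR : 1 < R := by rw [lt_div_iff₀ hδ]; linarith
  have hnest (z : ℂ) (n : ℕ) (h : R ≤ ‖qF p z n‖) : R ≤ ‖qF p z (n+1)‖ :=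
    (consecutiveProductBounds_qF hp hpδ z).le_succ_of_le hT hδT hδR hR.le h
  have hescape (z : ℂ) (n : ℕ) (h : R ≤ ‖qF p z n‖) : z ∉ Eset p := by
    rintro ⟨C, hC⟩
    obtain ⟨k, hk⟩ := ((consecutiveProductBounds_qF hp hpδ z).tendsto_atTop
      hT hδT hδR hR h |>.eventually_gt_atTop C).exists
    exact (hC (k - 1)).not_gt hk
  refine ⟨R, hR, ?_, fun n z hz => ?_⟩
  · ext z
    simp only [Set.mem_iInter, Set.mem_preimage, mem_ball_zero_iff]
    refine ⟨fun hz n => ?_, fun hz => ⟨R, fun n => (hz n).le⟩⟩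
    by_contra! h
    exact hescape z n h hz
  · simp only [Set.mem_preimage, mem_ball_zero_iff] at hz ⊢
    by_contra! h
    exact (hnest z n h).not_gt hz
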